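/- For p ≥ 1 and x, z : {1,…,p} → ZMod 2 with x_{p+1} := 0, define on (ℂ²)^{⊗(p+1)} the error operator E := id_0 ⊗ ⨂_{j=1}^{p} (Z^{z_j}·X^{x_j + x_{j+1}}). Then (∏_{j=1}^{p} v_j^{x_j}) · (∏_{j=1}^{p} Z_j^{z_j}) · E = X_0^{x_1} (the Pauli-X on the ancillary site 0 with exponent x_1, identity on sites 1,…,p). (This is the generic prescription (x̂_1⋯x̂_p)(ẑ_1⋯ẑ_p) by which Bob corrects the state Z^{z_j}X^{x_j+x_{j+1}}-errors he receives in the multi-qubit Ising teleportation protocol, recovering Alice's state exactly up to a possible X on an ancilla.) -/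

import Mathlib

/-!
Every operator involved is a tensor product of powers of a single involution (`X` or `Z`) on
each site, and `kron` is multiplicative, so a product of such operators is computed site by
site by adding exponent vectors in `ZMod 2`. The `Z`-part of `E` meets the `Z`-corrections
and cancels. Vertex `j` puts `x_j` on sites `j - 1` and `j`, so site `k ≥ 1` receives
`x_k + x_{k+1}` (using `x_{p+1} = 0` at `k = p`), which cancels the `X`-part of `E`, while
site `0` receives only `x_1`.
-/

noncomputable section
open Matrix
open scoped Classical

/-- The Pauli-X matrix. -/
def PX : Matrix (Fin 2) (Fin 2) ℂ := !![0, 1; 1, 0]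

/-- The Pauli-Z matrix. -/
def PZ : Matrix (Fin 2) (Fin 2) ℂ := !![1, 0; 0, -1]

/-- The operator on `(ℂ²)^{⊗(p+1)}` (sites `0,…,p`) acting as the 2×2 matrix `A`
on site `k` and as the identity elsewhere. -/
def site (p : ℕ) (A : Matrix (Fin 2) (Fin 2) ℂ) (k : Fin (p + 1)) :
    Matrix (Fin (p + 1) → Fin 2) (Fin (p + 1) → Fin 2) ℂ :=
  fun s t => (if ∀ j, j ≠ k → s j = t j then 1 else 0) * A (s k) (t k)

/-- The tensor (Kronecker) product `⨂_{k=0}^{p} M k` of single-site operators,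
as an operator on `(ℂ²)^{⊗(p+1)}`. -/
def kron (p : ℕ) (M : Fin (p + 1) → Matrix (Fin 2) (Fin 2) ℂ) :
    Matrix (Fin (p + 1) → Fin 2) (Fin (p + 1) → Fin 2) ℂ :=
  fun s t => ∏ k, M k (s k) (t k)

/-- The vertex operator `v_j := X_{j-1} · X_j` for `1 ≤ j ≤ p`; here `j : Fin p`
represents the vertex `j+1 ∈ {1,…,p}`, acting on sites `j` and `j+1`. -/
def vop (p : ℕ) (j : Fin p) :
    Matrix (Fin (p + 1) → Fin 2) (Fin (p + 1) → Fin 2) ℂ :=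
  site p PX j.castSucc * site p PX j.succ
lemma pow_val_add_of_pow_eq_one {M : Type*} [Monoid M] {n : ℕ} [NeZero n] {a : M}
    (ha : a ^ n = 1) (b c : ZMod n) : a ^ (b + c).val = a ^ b.val * a ^ c.val := by
  rw [ZMod.val_add, ← pow_eq_pow_mod _ ha, pow_add]

theorem Fin.sum_univ_single_castSucc {M : Type*} [AddCommMonoid M] {n : ℕ}
    (f : Fin (n + 1) → M) (hf : f (Fin.last n) = 0) :
    ∑ j : Fin n, Pi.single j.castSucc (f j.castSucc) = f := by
  conv_rhs =>
    rw [← Finset.univ_sum_single f, Fin.sum_univ_castSucc, hf, Pi.single_zero, add_zero]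

theorem Fin.sum_univ_single_succ {M : Type*} [AddCommMonoid M] {n : ℕ}
    (f : Fin (n + 1) → M) (hf : f 0 = 0) :
    ∑ j : Fin n, Pi.single j.succ (f j.succ) = f := by
  conv_rhs =>
    rw [← Finset.univ_sum_single f, Fin.sum_univ_succ, hf, Pi.single_zero, zero_add]

lemma kron_one (p : ℕ) : kron p (fun _ => 1) = 1 := by
  funext s t
  simp only [kron, Matrix.one_apply]
  by_cases h : s = t
  · simp [h]
  · obtain ⟨k, hk⟩ := Function.ne_iff.mp h
    simp only [if_neg h]
    exact Finset.prod_eq_zero (Finset.mem_univ k) (by simp [hk])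

lemma kron_mul (p : ℕ) (M N : Fin (p + 1) → Matrix (Fin 2) (Fin 2) ℂ) :
    kron p M * kron p N = kron p (M * N) := by
  funext s t
  simp only [kron, Matrix.mul_apply, Pi.mul_apply]
  rw [Finset.prod_univ_sum]
  simp [Finset.prod_mul_distrib]

lemma site_eq_kron (p : ℕ) (A : Matrix (Fin 2) (Fin 2) ℂ) (k : Fin (p + 1)) :
    site p A k = kron p (Pi.mulSingle k A) := by
  funext s t
  have hoff : ∀ j ∈ Finset.univ.erase k,
      (Pi.mulSingle k A : Fin (p + 1) → Matrix (Fin 2) (Fin 2) ℂ) j (s j) (t j) =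
        if s j = t j then 1 else 0 := fun j hj => by
    simp [Finset.ne_of_mem_erase hj, Matrix.one_apply]
  rw [site, kron, ← Finset.mul_prod_erase _ _ (Finset.mem_univ k), Finset.prod_congr rfl hoff,
    Finset.prod_boole, mul_comm, Pi.mulSingle_eq_same]
  simp [Finset.mem_erase]

lemma list_prod_ofFn_map_ofAdd {A M : Type*} [AddCommMonoid A] [Monoid M] {m : ℕ}
    (f : Multiplicative A →* M) (y : Fin m → A) :
    (List.ofFn fun j => f (.ofAdd (y j))).prod = f (.ofAdd (∑ j, y j)) := by
  rw [← Function.comp_def f, ← List.map_ofFn, ← map_list_prod, List.prod_ofFn,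
    ofAdd_sum]

section kronPow

variable (p : ℕ) {n : ℕ} [NeZero n] {A : Matrix (Fin 2) (Fin 2) ℂ} (hA : A ^ n = 1)

def kronPowHom : Multiplicative (Fin (p + 1) → ZMod n) →*
    Matrix (Fin (p + 1) → Fin 2) (Fin (p + 1) → Fin 2) ℂ where
  toFun y := kron p fun k => A ^ (y.toAdd k).val
  map_one' := by simpa using kron_one p
  map_mul' y y' := by
    simp only [toAdd_mul, Pi.add_apply, pow_val_add_of_pow_eq_one hA, kron_mul]
    rfl

variable {p}

lemma kronPowHom_ofAdd (y : Fin (p + 1) → ZMod n) :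
    kronPowHom p hA (.ofAdd y) = kron p fun k => A ^ (y k).val := rfl

lemma kronPowHom_pow_val (y : Fin (p + 1) → ZMod n) (c : ZMod n) :
    kronPowHom p hA (.ofAdd y) ^ c.val = kronPowHom p hA (.ofAdd (c • y)) := by
  rw [← map_pow, ← ofAdd_nsmul, ← Nat.cast_smul_eq_nsmul (ZMod n), ZMod.natCast_zmod_val]

lemma kronPowHom_single_one (k : Fin (p + 1)) :
    kronPowHom p hA (.ofAdd (Pi.single k 1)) = site p A k := by
  rw [kronPowHom_ofAdd, site_eq_kron]
  congr 1
  funext j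
  by_cases hj : j = k
  · rw [hj, Pi.single_eq_same, Pi.mulSingle_eq_same, ZMod.val_one_eq_one_mod,
      ← pow_eq_pow_mod _ hA, pow_one]
  · simp [hj]

lemma site_pow_val (k : Fin (p + 1)) (c : ZMod n) :
    site p A k ^ c.val = kronPowHom p hA (.ofAdd (Pi.single k c)) := by
  rw [← kronPowHom_single_one hA, kronPowHom_pow_val, ← Pi.single_smul, smul_eq_mul, mul_one]

lemma list_prod_site_succ_pow_val (z : ℕ → ZMod n) :
    (List.ofFn fun j : Fin p => site p A j.succ ^ (z ((j : ℕ) + 1)).val).prod =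
      kronPowHom p hA (.ofAdd fun k => if k = 0 then 0 else z k) := by
  simp only [site_pow_val hA, list_prod_ofFn_map_ofAdd]
  congr 2
  simpa using
    Fin.sum_univ_single_succ (fun k : Fin (p + 1) => if k = 0 then 0 else z k) (by simp)

lemma kron_ite_zero_pow_mul_pow {B : Matrix (Fin 2) (Fin 2) ℂ} (hB : B ^ n = 1)
    (a b : ℕ → ZMod n) :
    kron p (fun k => if (k : ℕ) = 0 then 1 else A ^ (a k).val * B ^ (b k).val) =
      kronPowHom p hA (.ofAdd fun k => if k = 0 then 0 else a k) *
        kronPowHom p hB (.ofAdd fun k => if k = 0 then 0 else b k) := by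
  rw [kronPowHom_ofAdd, kronPowHom_ofAdd, kron_mul]
  congr 1
  funext k
  by_cases hk : k = 0 <;> simp [hk]

end kronPow

lemma PX_sq : PX ^ 2 = 1 := by
  simp [sq, PX, Matrix.one_fin_two]

lemma PZ_sq : PZ ^ 2 = 1 := by
  simp [sq, PZ, Matrix.one_fin_two]

lemma vop_pow_val (p : ℕ) (j : Fin p) (c : ZMod 2) :
    vop p j ^ c.val =
      kronPowHom p PX_sq (.ofAdd (Pi.single j.castSucc c + Pi.single j.succ c)) := by
  rw [vop, ← kronPowHom_single_one PX_sq, ← kronPowHom_single_one PX_sq, ← map_mul,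
    ← ofAdd_add, kronPowHom_pow_val, smul_add, ← Pi.single_smul, ← Pi.single_smul,
    smul_eq_mul, mul_one]

lemma list_prod_vop_pow_val (p : ℕ) (x : ℕ → ZMod 2) (hx : x (p + 1) = 0) :
    (List.ofFn fun j : Fin p => vop p j ^ (x ((j : ℕ) + 1)).val).prod =
      kronPowHom p PX_sq
        (.ofAdd ((fun k : Fin (p + 1) => x ((k : ℕ) + 1)) +
          fun k : Fin (p + 1) => if k = 0 then 0 else x k)) := by
  simp only [vop_pow_val, list_prod_ofFn_map_ofAdd, Finset.sum_add_distrib]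
  congr 3
  · simpa using
      Fin.sum_univ_single_castSucc (fun k : Fin (p + 1) => x ((k : ℕ) + 1)) (by simpa)
  · simpa using
      Fin.sum_univ_single_succ (fun k : Fin (p + 1) => if k = 0 then 0 else x k) (by simp)

theorem generic_correction_general (p : ℕ) (x z : ℕ → ZMod 2)
    (hx : x (p + 1) = 0) :
    (List.ofFn fun j : Fin p => vop p j ^ (x ((j : ℕ) + 1)).val).prod *
      (List.ofFn fun j : Fin p => site p PZ j.succ ^ (z ((j : ℕ) + 1)).val).prod *
      kron p (fun k =>
        if (k : ℕ) = 0 then 1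
        else PZ ^ (z (k : ℕ)).val * PX ^ (x (k : ℕ) + x ((k : ℕ) + 1)).val) =
      site p PX 0 ^ (x 1).val := by
  rw [list_prod_vop_pow_val p x hx, list_prod_site_succ_pow_val PZ_sq,
    kron_ite_zero_pow_mul_pow PZ_sq PX_sq z (fun m => x m + x (m + 1)), mul_assoc,
    ← mul_assoc (kronPowHom p PZ_sq _), ← map_mul, ← ofAdd_add, CharTwo.add_self_eq_zero,
    ofAdd_zero, map_one, one_mul, ← map_mul, ← ofAdd_add, site_pow_val PX_sq]
  congr 2
  funext k
  by_cases hk : k = 0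
  · simp [hk]
  · simp only [hk, Pi.add_apply, if_false]
    rw [Pi.single_eq_of_ne hk, add_comm (x _), CharTwo.add_self_eq_zero]

/-- Bob's generic correction prescription in the multi-qubit Ising teleportation
protocol: with the error operator
`E := id_0 ⊗ ⨂_{j=1}^{p} (Z^{z_j}·X^{x_j + x_{j+1}})` (and `x_{p+1} := 0`),
`(∏_{j=1}^{p} v_j^{x_j}) · (∏_{j=1}^{p} Z_j^{z_j}) · E = X_0^{x_1}`. -/
theorem generic_correction (p : ℕ) (hp : 1 ≤ p) (x z : ℕ → ZMod 2)
    (hx : x (p + 1) = 0) :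
    (List.ofFn fun j : Fin p => vop p j ^ (x ((j : ℕ) + 1)).val).prod *
      (List.ofFn fun j : Fin p => site p PZ j.succ ^ (z ((j : ℕ) + 1)).val).prod *
      kron p (fun k =>
        if (k : ℕ) = 0 then 1
        else PZ ^ (z (k : ℕ)).val * PX ^ (x (k : ℕ) + x ((k : ℕ) + 1)).val) =
      site p PX 0 ^ (x 1).val :=
  generic_correction_general p x z hx
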